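/- For every a ∈ I₀ = (1/2, 1) there exists a function f holomorphic on an open neighborhood of cl D such that f(a, w) = 1 for all w with 2 ≤ |w| ≤ 3, and |f(z, w)| < 1 for all (z, w) ∈ cl D \ ({a} × cl A(2,3)). -/

import Mathlib

/-!
Over `cl D` the argument `φ` of `z` runs through `[0, 2π]`, and its two ends `φ ∈ [0, π/2]` and
`φ ∈ [3π/2, 2π]` lie over the disjoint regions `|w| ≤ 1` and `2 ≤ |w| ≤ 3`. Hence `log z` has a
single-valued holomorphic branch `L` with `Im L = φ` on a neighbourhood of `cl D`: the principal
branch where `|w| < 3/2` and `Re z + Im z > 0`, the branch with argument in `(π/4, 9π/4]` elsewhere.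
Take `f = g ∘ L` with `g ζ = exp (-i (ζ - ζ₀) - (ζ - ζ₀)² / 7)` and `ζ₀ = log a + 2πi`. Writing
`ζ - ζ₀ = x + iy`, `log |g ζ| = y + y²/7 - x²/7` is negative on the strip `-2π ≤ y ≤ 0` (as
`2π < 7`) except at `ζ = ζ₀`, that is at `z = a`, `φ = 2π`, where `w ∈ cl A(2,3)`.
-/

open Set Complex

noncomputable section

/-- The bounded Hartogs domain `D ⊂ ℂ²` from the paper. -/
def domD : Set (ℂ × ℂ) :=
  {p | ∃ r φ : ℝ, 1 / 2 < r ∧ r < 1 ∧ 0 < φ ∧ φ < 2 * Real.pi ∧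
    p.1 = (r : ℂ) * Complex.exp (φ * Complex.I) ∧
    (φ ≤ Real.pi / 2 → ‖p.2‖ < 1) ∧
    (Real.pi / 2 < φ → φ < 3 * Real.pi / 2 → ‖p.2‖ < 3) ∧
    (3 * Real.pi / 2 ≤ φ → 2 < ‖p.2‖ ∧ ‖p.2‖ < 3)}

/-- `K` is norming for the family `F` of functions on `closure S`. -/
def IsNorming {E : Type*} [TopologicalSpace E] (S K : Set E) (F : Set (E → ℂ)) : Prop :=
  ∀ f ∈ F, sSup ((fun p => ‖f p‖) '' K) =
    sSup ((fun p => ‖f p‖) '' closure S)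

/-- `O(cl S)`: functions extending holomorphically to an open neighborhood of `closure S`. -/
def Ocl {E : Type*} [NormedAddCommGroup E] [NormedSpace ℂ E] (S : Set E) :
    Set (E → ℂ) :=
  {f | ∃ U : Set E, IsOpen U ∧ closure S ⊆ U ∧ DifferentiableOn ℂ f U}

/-- `A(S)`: functions continuous on `closure S` and holomorphic on `S`. -/
def Acl {E : Type*} [NormedAddCommGroup E] [NormedSpace ℂ E] (S : Set E) :
    Set (E → ℂ) :=
  {f | ContinuousOn f (closure S) ∧ DifferentiableOn ℂ f S}

/-- `K` is the minimal compact norming set for the family `F` on `closure S`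
(i.e. the Shilov-type boundary associated with `F`). -/
def IsShilovFor {E : Type*} [NormedAddCommGroup E] [NormedSpace ℂ E]
    (S : Set E) (F : Set (E → ℂ)) (K : Set E) : Prop :=
  IsCompact K ∧ K ⊆ closure S ∧ IsNorming S K F ∧
    ∀ K' : Set E, IsCompact K' → K' ⊆ closure S → IsNorming S K' F → K ⊆ K'

open scoped Real

namespace HartogsDomain

lemma ofReal_mul_exp_mem_slitPlane {r ψ : ℝ} (hr : 0 < r) (hψ : ψ ∈ Ioo (-π) π) :
    (r : ℂ) * exp (ψ * I) ∈ slitPlane := by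
  rw [mem_slitPlane_iff, re_ofReal_mul, im_ofReal_mul, exp_ofReal_mul_I_re,
    exp_ofReal_mul_I_im]
  by_cases h : ψ = 0
  · simp [h, hr]
  · exact Or.inr (mul_ne_zero hr.ne' ((Real.sin_eq_zero_iff_of_lt_of_lt hψ.1 hψ.2).not.2 h))

/-- The branch of the logarithm with imaginary part in `(θ - π, θ + π]`. -/
def logBranch (θ : ℝ) (z : ℂ) : ℂ := log (z * exp (-(θ * I))) + θ * I

lemma ofReal_mul_exp_mul_exp_neg (r φ θ : ℝ) :
    (r : ℂ) * exp (φ * I) * exp (-(θ * I)) = r * exp ((φ - θ : ℝ) * I) := by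
  rw [mul_assoc, ← exp_add]
  push_cast
  ring_nf

lemma logBranch_ofReal_mul_exp {θ r φ : ℝ} (hr : 0 < r) (hφ : φ ∈ Ioc (θ - π) (θ + π)) :
    logBranch θ (r * exp (φ * I)) = Real.log r + φ * I := by
  have hexp : (r : ℂ) * exp ((φ - θ : ℝ) * I) = exp (Real.log r + (φ - θ : ℝ) * I) := by
    rw [exp_add, ← ofReal_exp, Real.exp_log hr]
  have him : (Real.log r + (φ - θ : ℝ) * I : ℂ).im = φ - θ := by simp
  rw [logBranch, ofReal_mul_exp_mul_exp_neg, hexp,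
    log_exp (by rw [him]; linarith [hφ.1]) (by rw [him]; linarith [hφ.2])]
  push_cast
  ring

lemma log_ofReal_mul_exp {r φ : ℝ} (hr : 0 < r) (hφ : φ ∈ Ioc (-π) π) :
    log (r * exp (φ * I)) = Real.log r + φ * I := by
  simpa [logBranch] using logBranch_ofReal_mul_exp (θ := 0) hr (by simpa using hφ)

lemma logBranch_eq_log {θ : ℝ} {z : ℂ} (hz : z ≠ 0) (harg : arg z ∈ Ioc (θ - π) (θ + π)) :
    logBranch θ z = log z := by
  conv_lhs => rw [← norm_mul_exp_arg_mul_I z]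
  rw [logBranch_ofReal_mul_exp (norm_pos_iff.2 hz) harg, log]

lemma differentiableAt_logBranch {θ : ℝ} {z : ℂ} (h : z * exp (-(θ * I)) ∈ slitPlane) :
    DifferentiableAt ℂ (logBranch θ) z :=
  ((differentiableAt_id.mul_const _).clog h).add_const _

lemma pi_div_four_lt_arg {z : ℂ} (him : 0 < z.im) (hre : z.re < z.im) : π / 4 < arg z := by
  by_contra! h
  have harg : 0 ≤ arg z := arg_nonneg_iff.2 him.le
  have hcos : √2 / 2 ≤ Real.cos (arg z) := by
    rw [← Real.cos_pi_div_four]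
    exact Real.cos_le_cos_of_nonneg_of_le_pi harg (by linarith [Real.pi_pos]) h
  have hsin : Real.sin (arg z) ≤ √2 / 2 := by
    rw [← Real.sin_pi_div_four]
    exact Real.sin_le_sin_of_le_of_le_pi_div_two (by linarith) (by linarith [Real.pi_pos]) h
  have := mul_le_mul_of_nonneg_left (hsin.trans hcos) (norm_nonneg z)
  rw [norm_mul_cos_arg, norm_mul_sin_arg] at this
  linarith

def peak (ζ₀ ζ : ℂ) : ℂ := exp (-(I * (ζ - ζ₀)) - (ζ - ζ₀) ^ 2 / 7)

lemma peak_self (ζ₀ : ℂ) : peak ζ₀ ζ₀ = 1 := by simp [peak]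

lemma differentiable_peak (ζ₀ : ℂ) : Differentiable ℂ (peak ζ₀) := by
  unfold peak; fun_prop

lemma norm_peak_lt_one {ζ₀ ζ : ℂ} (him : (ζ - ζ₀).im ∈ Ioc (-7) 0) (hne : ζ ≠ ζ₀) :
    ‖peak ζ₀ ζ‖ < 1 := by
  set η := ζ - ζ₀
  have hre : (-(I * η) - η ^ 2 / 7).re = η.im + η.im ^ 2 / 7 - η.re ^ 2 / 7 := by
    simp only [sq, sub_re, neg_re, mul_re, I_re, zero_mul, I_im, one_mul, zero_sub, neg_neg,
      div_ofNat_re]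
    ring
  rw [peak, norm_exp, Real.exp_lt_one_iff, hre]
  rcases him.2.lt_or_eq with hneg | hzero
  · nlinarith [sq_nonneg η.re, him.1]
  · have : η.re ≠ 0 := fun h => sub_ne_zero.2 hne (Complex.ext h hzero)
    rw [hzero]
    linarith [pow_pos (abs_pos.2 this) 2, sq_abs η.re]

def principalChart : Set (ℂ × ℂ) := {p | ‖p.2‖ < 3 / 2 ∧ 0 < p.1.re + p.1.im}

def rotatedChart : Set (ℂ × ℂ) :=
  {p | p.1 * exp (-((5 * π / 4 : ℝ) * I)) ∈ slitPlane ∧ (p.1.re < |p.1.im| ∨ 3 / 2 < ‖p.2‖)}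

lemma isOpen_principalChart : IsOpen principalChart :=
  show IsOpen ({p : ℂ × ℂ | ‖p.2‖ < 3 / 2} ∩ {p | 0 < p.1.re + p.1.im}) from
    (isOpen_lt (by fun_prop) continuous_const).inter (isOpen_lt continuous_const (by fun_prop))

lemma isOpen_rotatedChart : IsOpen rotatedChart :=
  show IsOpen ((fun p : ℂ × ℂ => p.1 * exp (-((5 * π / 4 : ℝ) * I))) ⁻¹' slitPlane ∩
      ({p | p.1.re < |p.1.im|} ∪ {p | 3 / 2 < ‖p.2‖})) from
    (isOpen_slitPlane.preimage (by fun_prop)).inter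
      ((isOpen_lt (by fun_prop) (by fun_prop)).union (isOpen_lt continuous_const (by fun_prop)))

/-- The two charts meet only where `π / 4 < arg z < 3π / 4`, so the two branches agree there. -/
lemma log_eq_logBranch_of_mem_inter {p : ℂ × ℂ} (hp : p ∈ principalChart ∩ rotatedChart) :
    log p.1 = logBranch (5 * π / 4) p.1 := by
  obtain ⟨⟨hw, hpos⟩, -, hsector | hw'⟩ := hp
  · have him : 0 < p.1.im := by
      by_contra! h
      rw [abs_of_nonpos h] at hsector
      linarith
    rw [abs_of_pos him] at hsector
    have hz : p.1 ≠ 0 := fun h => by simp [h] at him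
    refine (logBranch_eq_log hz ⟨?_, ?_⟩).symm
    · linarith [pi_div_four_lt_arg him hsector]
    · linarith [arg_le_pi p.1, Real.pi_pos]
  · linarith

open Classical in
def unwoundLog (p : ℂ × ℂ) : ℂ :=
  if p ∈ principalChart then log p.1 else logBranch (5 * π / 4) p.1

lemma eqOn_unwoundLog_logBranch :
    EqOn unwoundLog (fun p => logBranch (5 * π / 4) p.1) rotatedChart := by
  intro p hp
  by_cases h : p ∈ principalChart
  · rw [unwoundLog, if_pos h]
    exact log_eq_logBranch_of_mem_inter ⟨h, hp⟩
  · exact if_neg h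

lemma differentiableOn_unwoundLog :
    DifferentiableOn ℂ unwoundLog (principalChart ∪ rotatedChart) := by
  refine DifferentiableOn.union_of_isOpen ?_ ?_ isOpen_principalChart isOpen_rotatedChart
  · refine DifferentiableOn.congr (fun p hp => ?_) (fun p hp => if_pos hp)
    refine (differentiableAt_fst.clog ?_).differentiableWithinAt
    rw [mem_slitPlane_iff]
    by_cases him : p.1.im = 0
    · exact Or.inl (by linarith [hp.2])
    · exact Or.inr him
  · refine DifferentiableOn.congr (fun p hp => ?_) eqOn_unwoundLog_logBranch
    exact ((differentiableAt_logBranch hp.1).comp p differentiableAt_fst).differentiableWithinAt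

def polarMap (q : ℝ × ℝ × ℂ) : ℂ × ℂ := ((q.1 : ℂ) * exp (q.2.1 * I), q.2.2)

def polarBox : Set (ℝ × ℝ × ℂ) :=
  Icc (1 / 2) 1 ×ˢ
    (Icc 0 (π / 2) ×ˢ Metric.closedBall 0 1 ∪
      Icc (π / 2) (3 * π / 2) ×ˢ Metric.closedBall 0 3 ∪
      Icc (3 * π / 2) (2 * π) ×ˢ (Metric.closedBall 0 3 \ Metric.ball 0 2))

lemma continuous_polarMap : Continuous polarMap := by
  unfold polarMap; fun_prop

lemma isCompact_polarBox : IsCompact polarBox :=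
  isCompact_Icc.prod
    (((isCompact_Icc.prod (isCompact_closedBall _ _)).union
      (isCompact_Icc.prod (isCompact_closedBall _ _))).union
      (isCompact_Icc.prod ((isCompact_closedBall _ _).diff Metric.isOpen_ball)))

lemma closure_domD_subset : closure domD ⊆ polarMap '' polarBox := by
  refine closure_minimal ?_ (isCompact_polarBox.image continuous_polarMap).isClosed
  rintro p ⟨r, φ, hr₁, hr₂, hφ₀, hφ₂, hz, hw₁, hw₂, hw₃⟩
  refine ⟨(r, φ, p.2), ⟨⟨hr₁.le, hr₂.le⟩, ?_⟩, Prod.ext hz.symm rfl⟩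
  simp only [mem_union, mem_prod, mem_Icc, mem_sdiff, Metric.mem_closedBall,
    Metric.mem_ball, dist_zero_right, not_lt]
  rcases le_or_gt φ (π / 2) with h | h
  · exact Or.inl (Or.inl ⟨⟨hφ₀.le, h⟩, (hw₁ h).le⟩)
  rcases lt_or_ge φ (3 * π / 2) with h' | h'
  · exact Or.inl (Or.inr ⟨⟨h.le, h'.le⟩, (hw₂ h h').le⟩)
  · exact Or.inr ⟨⟨h', hφ₂.le⟩, (hw₃ h').2.le, (hw₃ h').1.le⟩

lemma polarMap_mem_chart {q : ℝ × ℝ × ℂ} (hq : q ∈ polarBox) :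
    (polarMap q ∈ principalChart ∧ q.2.1 ∈ Ioc (-π) π) ∨
      (polarMap q ∈ rotatedChart ∧ q.2.1 ∈ Ioc (5 * π / 4 - π) (5 * π / 4 + π)) := by
  obtain ⟨r, φ, w⟩ := q
  obtain ⟨⟨hr₁, -⟩, (⟨⟨hφ₁, hφ₂⟩, hw⟩ | ⟨⟨hφ₁, hφ₂⟩, hw⟩) | ⟨⟨hφ₁, hφ₂⟩, -, hw⟩⟩ := hq
  all_goals
    simp only [polarMap, principalChart, rotatedChart, mem_ofPred_eq, re_ofReal_mul,
      im_ofReal_mul, exp_ofReal_mul_I_re, exp_ofReal_mul_I_im, ofReal_mul_exp_mul_exp_neg,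
      mem_Ioc, Metric.mem_closedBall, Metric.mem_ball, dist_zero_right, not_lt] at hw ⊢
    have hr : 0 < r := by linarith
    have hπ := Real.pi_pos
    have hsc := Real.sin_sq_add_cos_sq φ
  · have hcos : 0 ≤ Real.cos φ := Real.cos_nonneg_of_mem_Icc ⟨by linarith, hφ₂⟩
    have hsin : 0 ≤ Real.sin φ := Real.sin_nonneg_of_nonneg_of_le_pi hφ₁ (by linarith)
    refine Or.inl ⟨⟨by linarith, ?_⟩, by linarith, by linarith⟩
    nlinarith [mul_nonneg hcos hsin]
  · have hcos : Real.cos φ ≤ 0 := Real.cos_nonpos_of_pi_div_two_le_of_le hφ₁ (by linarith)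
    refine Or.inr ⟨⟨ofReal_mul_exp_mem_slitPlane hr ⟨by linarith, by linarith⟩, Or.inl ?_⟩,
      by linarith, by linarith⟩
    by_contra! h
    have hc : r * Real.cos φ = 0 := le_antisymm (by nlinarith) ((abs_nonneg _).trans h)
    have hs : r * Real.sin φ = 0 := abs_eq_zero.1 (le_antisymm (h.trans hc.le) (abs_nonneg _))
    have : r ^ 2 * (Real.sin φ ^ 2 + Real.cos φ ^ 2) = 0 := by
      linear_combination (r * Real.sin φ) * hs + (r * Real.cos φ) * hc
    rw [hsc, mul_one] at this
    exact hr.ne' (pow_eq_zero_iff two_ne_zero |>.1 this)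
  · refine Or.inr ⟨⟨ofReal_mul_exp_mem_slitPlane hr ⟨by linarith, by linarith⟩, Or.inr ?_⟩,
      by linarith, by linarith⟩
    linarith

lemma unwoundLog_polarMap {q : ℝ × ℝ × ℂ} (hq : q ∈ polarBox) :
    unwoundLog (polarMap q) = Real.log q.1 + q.2.1 * I := by
  have hr : 0 < q.1 := by linarith [hq.1.1]
  rcases polarMap_mem_chart hq with ⟨h, hφ⟩ | ⟨h, hφ⟩
  · rw [unwoundLog, if_pos h]
    exact log_ofReal_mul_exp hr hφ
  · rw [eqOn_unwoundLog_logBranch h]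
    exact logBranch_ofReal_mul_exp hr hφ

lemma polarMap_two_pi (r : ℝ) (w : ℂ) : polarMap (r, 2 * π, w) = ((r : ℂ), w) := by
  simp only [polarMap, ofReal_mul, ofReal_ofNat, exp_two_pi_mul_I, mul_one]

lemma polarBox_subset_Icc_prod : polarBox ⊆ Icc (1 / 2) 1 ×ˢ Icc 0 (2 * π) ×ˢ univ := by
  have hπ := Real.pi_pos
  rintro ⟨r, φ, w⟩ ⟨hr, (⟨⟨hφ₁, hφ₂⟩, -⟩ | ⟨⟨hφ₁, hφ₂⟩, -⟩) | ⟨⟨hφ₁, hφ₂⟩, -⟩⟩ <;>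
    exact ⟨hr, ⟨by linarith, by linarith⟩, trivial⟩

lemma mem_polarBox_two_pi {r : ℝ} {w : ℂ} :
    (r, 2 * π, w) ∈ polarBox ↔ r ∈ Icc (1 / 2) 1 ∧ 2 ≤ ‖w‖ ∧ ‖w‖ ≤ 3 := by
  have hπ := Real.pi_pos
  simp only [polarBox, mem_prod, mem_union, mem_Icc, mem_sdiff, Metric.mem_closedBall,
    Metric.mem_ball, dist_zero_right, not_lt]
  constructor
  · rintro ⟨hr, (⟨⟨-, h⟩, -⟩ | ⟨⟨-, h⟩, -⟩) | ⟨-, hw₃, hw₂⟩⟩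
    · linarith
    · linarith
    · exact ⟨hr, hw₂, hw₃⟩
  · rintro ⟨hr, hw₂, hw₃⟩
    exact ⟨hr, Or.inr ⟨⟨by linarith, le_rfl⟩, hw₃, hw₂⟩⟩

end HartogsDomain

open HartogsDomain in
theorem stmt16 (a : ℝ) (ha : a ∈ Ioo (1 / 2 : ℝ) 1) :
    ∃ (f : ℂ × ℂ → ℂ) (U : Set (ℂ × ℂ)), IsOpen U ∧ closure domD ⊆ U ∧
      DifferentiableOn ℂ f U ∧
      (∀ w : ℂ, 2 ≤ ‖w‖ → ‖w‖ ≤ 3 → f ((a : ℂ), w) = 1) ∧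
      (∀ p ∈ closure domD, ¬(p.1 = (a : ℂ) ∧ 2 ≤ ‖p.2‖ ∧ ‖p.2‖ ≤ 3) →
        ‖f p‖ < 1) := by
  set ζ₀ : ℂ := Real.log a + (2 * π : ℝ) * I
  refine ⟨fun p => peak ζ₀ (unwoundLog p), principalChart ∪ rotatedChart,
    isOpen_principalChart.union isOpen_rotatedChart, fun p hp => ?_,
    (differentiable_peak ζ₀).comp_differentiableOn differentiableOn_unwoundLog,
    fun w hw₂ hw₃ => ?_, fun p hp hp_ne => ?_⟩
  · obtain ⟨q, hq, rfl⟩ := closure_domD_subset hp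
    exact (polarMap_mem_chart hq).imp And.left And.left
  · have hq : (a, 2 * π, w) ∈ polarBox :=
      mem_polarBox_two_pi.2 ⟨Ioo_subset_Icc_self ha, hw₂, hw₃⟩
    show peak ζ₀ (unwoundLog ((a : ℂ), w)) = 1
    rw [← polarMap_two_pi, unwoundLog_polarMap hq]
    exact peak_self ζ₀
  · obtain ⟨⟨r, φ, w⟩, hq, rfl⟩ := closure_domD_subset hp
    obtain ⟨⟨hr, -⟩, ⟨hφ₀, hφ₂⟩, -⟩ := polarBox_subset_Icc_prod hq
    show ‖peak ζ₀ (unwoundLog (polarMap (r, φ, w)))‖ < 1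
    rw [unwoundLog_polarMap hq]
    have him : (Real.log r + φ * I - ζ₀).im = φ - 2 * π := by simp [ζ₀]
    have hπ := Real.pi_lt_d2
    refine norm_peak_lt_one (by rw [him]; constructor <;> linarith) fun heq => hp_ne ?_
    have hlog : Real.log r = Real.log a := by simpa [ζ₀] using congrArg re heq
    have hφ : φ = 2 * π := by simpa [ζ₀] using congrArg im heq
    obtain rfl : r = a :=
      Real.log_injOn_pos (mem_Ioi.2 (by linarith)) (mem_Ioi.2 (by linarith [ha.1])) hlog
    subst hφ
    rw [polarMap_two_pi]
    exact ⟨rfl, (mem_polarBox_two_pi.1 hq).2⟩
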